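/- If U : (Fin d × Fin d) → (Fin d × Fin d) → ℂ is unitary and its reshuffling U^R and partial transpose U^Γ are also unitary (U is 2-unitary), then the state ψ(j,k,l,m) = U_{(j,k),(l,m)}/d is an AME(4,d) state: Σ|ψ|² = 1 and for each of the three balanced bipartitions the two-party reduced density matrix equals (1/d²)·I, i.e. Σ_{l,m} ψ(j,k,l,m)·conj(ψ(j',k',l,m)) = (1/d²)·δ_{jj'}δ_{kk'}, Σ_{k,m} ψ(j,k,l,m)·conj(ψ(j',k,l',m)) = (1/d²)·δ_{jj'}δ_{ll'}, and Σ_{k,l} ψ(j,k,l,m)·conj(ψ(j',k,l,m')) = (1/d²)·δ_{jj'}δ_{mm'}. -/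

import Mathlib

open Matrix Complex BigOperators

noncomputable section

lemma unit_row {n : Type*} [Fintype n] [DecidableEq n] {M : Matrix n n ℂ}
    (h : M ∈ Matrix.unitaryGroup n ℂ) (p q : n) :
    ∑ x, M p x * (starRingEnd ℂ) (M q x) = if p = q then 1 else 0 := by
  have h1 : M * star M = 1 := Matrix.mem_unitaryGroup_iff.mp h
  have := congrFun (congrFun h1 p) q
  simpa [Matrix.mul_apply, Matrix.one_apply, Matrix.star_apply] using this

lemma rowsum {d : ℕ} (hd : 1 ≤ d) (M : Matrix (Fin d × Fin d) (Fin d × Fin d) ℂ)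
    (h : M ∈ Matrix.unitaryGroup (Fin d × Fin d) ℂ) (p q : Fin d × Fin d) :
    ∑ l : Fin d, ∑ m : Fin d, (M p (l, m) / (d : ℂ)) * (starRingEnd ℂ) (M q (l, m) / (d : ℂ))
      = if p = q then 1 / ((d : ℂ) ^ 2) else 0 := by
  have hdc : (d : ℂ) ≠ 0 := Nat.cast_ne_zero.mpr (by omega)
  have key := unit_row h p q
  rw [Fintype.sum_prod_type] at key
  have : ∑ l : Fin d, ∑ m : Fin d, (M p (l, m) / (d : ℂ)) * (starRingEnd ℂ) (M q (l, m) / (d : ℂ))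
      = (∑ l : Fin d, ∑ m : Fin d, M p (l, m) * (starRingEnd ℂ) (M q (l, m))) / (d : ℂ) ^ 2 := by
    rw [Finset.sum_div]
    refine Finset.sum_congr rfl fun l _ => ?_
    rw [Finset.sum_div]
    refine Finset.sum_congr rfl fun m _ => ?_
    rw [map_div₀, map_natCast, div_mul_div_comm, sq]
  rw [this, key]
  split <;> simp

/-- Reshuffling: `X^R_{(j,k),(l,m)} = X_{(j,l),(k,m)}`. -/
def reshuffle {d : ℕ} (X : Matrix (Fin d × Fin d) (Fin d × Fin d) ℂ) :
    Matrix (Fin d × Fin d) (Fin d × Fin d) ℂ :=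
  fun p q => X (p.1, q.1) (p.2, q.2)

/-- Partial transpose: `X^Γ_{(j,k),(l,m)} = X_{(j,m),(l,k)}`. -/
def ptranspose {d : ℕ} (X : Matrix (Fin d × Fin d) (Fin d × Fin d) ℂ) :
    Matrix (Fin d × Fin d) (Fin d × Fin d) ℂ :=
  fun p q => X (p.1, q.2) (q.1, p.2)

def IsUnitary {n : Type*} [Fintype n] [DecidableEq n] (M : Matrix n n ℂ) : Prop :=
  M ∈ Matrix.unitaryGroup n ℂ
/-- If `U` is 2-unitary on `ℂ^{d²}` then `ψ(j,k,l,m) = U_{(j,k),(l,m)}/d` is an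
AME(4,d) state: it is normalized and all three two-party reduced density matrices
equal `(1/d²)·I`. -/
theorem two_unitary_gives_AME_4_d (d : ℕ) (hd : 1 ≤ d)
    (U : Matrix (Fin d × Fin d) (Fin d × Fin d) ℂ)
    (hU : IsUnitary U) (hUR : IsUnitary (reshuffle U)) (hUG : IsUnitary (ptranspose U)) :
    (∑ j : Fin d, ∑ k : Fin d, ∑ l : Fin d, ∑ m : Fin d,
        ‖U (j, k) (l, m) / (d : ℂ)‖ ^ 2 = 1) ∧
    (∀ j j' k k', ∑ l : Fin d, ∑ m : Fin d,
        (U (j, k) (l, m) / (d : ℂ)) * (starRingEnd ℂ) (U (j', k') (l, m) / (d : ℂ)) =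
      if j = j' ∧ k = k' then (1 / ((d : ℂ) ^ 2)) else 0) ∧
    (∀ j j' l l', ∑ k : Fin d, ∑ m : Fin d,
        (U (j, k) (l, m) / (d : ℂ)) * (starRingEnd ℂ) (U (j', k) (l', m) / (d : ℂ)) =
      if j = j' ∧ l = l' then (1 / ((d : ℂ) ^ 2)) else 0) ∧
    (∀ j j' m m', ∑ k : Fin d, ∑ l : Fin d,
        (U (j, k) (l, m) / (d : ℂ)) * (starRingEnd ℂ) (U (j', k) (l, m') / (d : ℂ)) =
      if j = j' ∧ m = m' then (1 / ((d : ℂ) ^ 2)) else 0) := by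
  have hdc : (d : ℂ) ≠ 0 := Nat.cast_ne_zero.mpr (by omega)
  have c2 : ∀ j j' k k', ∑ l : Fin d, ∑ m : Fin d,
      (U (j, k) (l, m) / (d : ℂ)) * (starRingEnd ℂ) (U (j', k') (l, m) / (d : ℂ)) =
      if j = j' ∧ k = k' then (1 / ((d : ℂ) ^ 2)) else 0 := by
    intro j j' k k'
    simpa [Prod.ext_iff] using rowsum hd U hU (j, k) (j', k')
  refine ⟨?_, c2, ?_, ?_⟩
  · -- normalization
    have key : ∀ j k : Fin d, ∑ l : Fin d, ∑ m : Fin d,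
        ((‖U (j, k) (l, m) / (d : ℂ)‖ : ℂ)) ^ 2 = 1 / ((d : ℂ) ^ 2) := by
      intro j k
      simp_rw [← Complex.ofReal_pow, Complex.sq_norm, ← Complex.mul_conj]
      simpa using c2 j j k k
    have cast1 : ((∑ j : Fin d, ∑ k : Fin d, ∑ l : Fin d, ∑ m : Fin d,
        ‖U (j, k) (l, m) / (d : ℂ)‖ ^ 2 : ℝ) : ℂ) = 1 := by
      push_cast
      simp_rw [key]
      simp only [Finset.sum_const, Finset.card_univ, Fintype.card_fin, nsmul_eq_mul]
      field_simp
    exact_mod_cast cast1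
  · intro j j' l l'
    simpa [reshuffle, Prod.ext_iff] using rowsum hd (reshuffle U) hUR (j, l) (j', l')
  · intro j j' m m'
    rw [Finset.sum_comm]
    simpa [ptranspose, Prod.ext_iff] using rowsum hd (ptranspose U) hUG (j, m) (j', m')
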